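/- The opposite of the wide subcategory Δ^act of the simplex category consisting of active morphisms (endpoint-preserving maps: f(0) = 0 and f(n) = m for f : [n] → [m]) is equivalent to the augmented simplex category Δ_a (finite, possibly empty, linear orders and monotone maps). An equivalence is given on objects by [n] ↦ the linear order with n elements, sending the coface map δⁿ_i : [n-1] → [n] (0 < i < n) to the codegeneracy σ^{n-2}_{i-1} and the codegeneracy σⁿ_i : [n+1] → [n] to the coface δⁿ_i. -/

import Mathlib

open CategoryTheory

/-- An object of the wide subcategory `Δ^act` of the simplex category on active
(endpoint-preserving) morphisms: `⟨n⟩` represents `[n]`. -/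
structure ActiveObj where
  n : ℕ

/-- The wide subcategory `Δ^act` of the simplex category whose morphisms are the
active (endpoint-preserving) monotone maps. -/
instance : Category ActiveObj where
  Hom x y := {f : Fin (x.n + 1) →o Fin (y.n + 1) // f 0 = 0 ∧ f (Fin.last x.n) = Fin.last y.n}
  id x := ⟨OrderHom.id, rfl, rfl⟩
  comp {x y z} f g := ⟨g.1.comp f.1, by
    constructor
    · show g.1 (f.1 0) = 0
      rw [f.2.1, g.2.1]
    · show g.1 (f.1 (Fin.last x.n)) = Fin.last z.n
      rw [f.2.2, g.2.2]⟩
  id_comp f := Subtype.ext rfl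
  comp_id f := Subtype.ext rfl
  assoc f g h := Subtype.ext rfl

/-- An object of the augmented simplex category `Δ_a`: `⟨n⟩` is the linear order with
`n` elements (possibly empty). -/
structure AugObj where
  n : ℕ

/-- The augmented simplex category `Δ_a` of finite (possibly empty) linear orders and
monotone maps. -/
instance : Category AugObj where
  Hom x y := Fin x.n →o Fin y.n
  id x := OrderHom.id
  comp f g := g.comp f

/-- The underlying monotone map of the codegeneracy `σⁿ_i : [n+1] → [n]`. -/
def σmapAct (n : ℕ) (i : Fin (n + 1)) : Fin (n + 2) →o Fin (n + 1) where
  toFun j := ⟨if (j : ℕ) ≤ (i : ℕ) then (j : ℕ) else (j : ℕ) - 1, by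
    have hj := j.isLt; have hi := i.isLt; split <;> omega⟩
  monotone' := by
    intro a b hab
    have hab' : (a : ℕ) ≤ (b : ℕ) := hab
    simp only [Fin.mk_le_mk]
    split_ifs <;> omega

/-- The codegeneracy `σⁿ_i : [n+1] → [n]` (hitting `i` twice), as an active morphism. -/
def σact (n : ℕ) (i : Fin (n + 1)) : (ActiveObj.mk (n + 1)) ⟶ (ActiveObj.mk n) :=
  ⟨σmapAct n i, by
    constructor
    · apply Fin.ext
      show (if (0 : ℕ) ≤ (i : ℕ) then (0 : ℕ) else 0 - 1) = ((0 : Fin (n + 1)) : ℕ)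
      simp
    · apply Fin.ext
      have hi := i.isLt
      show (if n + 1 ≤ (i : ℕ) then n + 1 else n + 1 - 1) = ((Fin.last n : Fin (n + 1)) : ℕ)
      rw [if_neg (by omega)]
      simp⟩

/-- The underlying monotone map of the coface `δ : [m] → [m+1]` skipping `i`. -/
def δmapAct (m : ℕ) (i : ℕ) : Fin (m + 1) →o Fin (m + 2) where
  toFun j := ⟨if (j : ℕ) < i then (j : ℕ) else (j : ℕ) + 1, by
    have hj := j.isLt; split <;> omega⟩
  monotone' := by
    intro a b hab
    have hab' : (a : ℕ) ≤ (b : ℕ) := hab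
    simp only [Fin.mk_le_mk]
    split_ifs <;> omega

/-- The coface `δⁿ_i : [n-1] → [n]` for an interior `0 < i < n` (here `[m] → [m+1]`
skipping the value `i` with `1 ≤ i ≤ m`), as an active morphism. -/
def δact (m : ℕ) (i : ℕ) (h1 : 1 ≤ i) (h2 : i ≤ m) :
    (ActiveObj.mk m) ⟶ (ActiveObj.mk (m + 1)) :=
  ⟨δmapAct m i, by
    constructor
    · apply Fin.ext
      show (if (0 : ℕ) < i then (0 : ℕ) else 0 + 1) = ((0 : Fin (m + 2)) : ℕ)
      rw [if_pos (by omega)]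
      simp
    · apply Fin.ext
      show (if m < i then m else m + 1) = ((Fin.last (m + 1) : Fin (m + 2)) : ℕ)
      rw [if_neg (by omega)]
      simp⟩

/-- The coface map `δ_i` in the augmented simplex category (the monotone injection
skipping `i`). -/
def δa (n : ℕ) (i : Fin (n + 1)) : (AugObj.mk n) ⟶ (AugObj.mk (n + 1)) :=
  (Fin.succAboveOrderEmb i).toOrderHom

/-- The codegeneracy map `σ_k` in the augmented simplex category (the monotone
surjection hitting `k` twice). -/
def σaMap (m : ℕ) (k : ℕ) (_hk : k < m) : Fin (m + 1) →o Fin m where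
  toFun j := ⟨if (j : ℕ) ≤ k then (j : ℕ) else (j : ℕ) - 1, by
    have hj := j.isLt; split <;> omega⟩
  monotone' := by
    intro a b hab
    have hab' : (a : ℕ) ≤ (b : ℕ) := hab
    simp only [Fin.mk_le_mk]
    split_ifs <;> omega

/-- The codegeneracy map `σ_k` in the augmented simplex category, as a morphism. -/
def σa (m : ℕ) (k : ℕ) (hk : k < m) : (AugObj.mk (m + 1)) ⟶ (AugObj.mk m) :=
  σaMap m k hk

/-!
An active map `f : [m] → [n]` and a monotone map `g : Fin n → Fin m` determine each other
through `f i ≤ j ↔ i ≤ g j` (for `i ∈ [m]` and `j < n`): read `j : Fin n` as the gap between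
`j` and `j + 1` in `[n]`; then `g j` is the last `i` with `f i ≤ j`, and conversely `f i` is the
number of gaps `j` with `g j < i`. The partner is unique on either side, so `f ↦ g` is a
contravariant functor which is fully faithful and bijective on objects.
-/

open Finset

theorem Fin.lt_card_filter_iff_of_antitone {N : ℕ} {p : Fin N → Prop} [DecidablePred p]
    (hp : Antitone p) (k : Fin N) : (k : ℕ) < #{j | p j} ↔ p k := by
  constructor
  · intro hk
    by_contra hpk
    have hsub : ({j | p j} : Finset (Fin N)) ⊆ Iio k := fun j hj =>
      mem_Iio.2 (lt_of_not_ge fun hkj => hpk (hp hkj (mem_filter.1 hj).2))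
    have := card_le_card hsub
    rw [Fin.card_Iio] at this
    omega
  · intro hpk
    have hsub : Iic k ⊆ ({j | p j} : Finset (Fin N)) := fun j hj => by
      simpa using hp (mem_Iic.1 hj) hpk
    have := card_le_card hsub
    rw [Fin.card_Iic] at this
    omega

section GaloisDual

variable {m n : ℕ}

def GaloisDual (f : Fin (m + 1) → Fin (n + 1)) (g : Fin n → Fin m) : Prop :=
  ∀ (i : Fin (m + 1)) (j : Fin n), (f i : ℕ) ≤ j ↔ (i : ℕ) ≤ g j

theorem GaloisDual.id : GaloisDual (id : Fin (m + 1) → Fin (m + 1)) id := fun _ _ => Iff.rfl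

theorem GaloisDual.comp {k : ℕ} {f : Fin (m + 1) → Fin (n + 1)} {g : Fin n → Fin m}
    {f' : Fin (n + 1) → Fin (k + 1)} {g' : Fin k → Fin n}
    (hfg : GaloisDual f g) (hfg' : GaloisDual f' g') : GaloisDual (f' ∘ f) (g ∘ g') :=
  fun i j => (hfg' (f i) j).trans (hfg i (g' j))

theorem GaloisDual.right_unique {f : Fin (m + 1) → Fin (n + 1)} {g g' : Fin n → Fin m}
    (hg : GaloisDual f g) (hg' : GaloisDual f g') : g = g' := by
  funext j
  refine eq_of_forall_le_iff fun c => ?_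
  simpa using (hg c.castSucc j).symm.trans (hg' c.castSucc j)

theorem GaloisDual.left_unique {f f' : Fin (m + 1) → Fin (n + 1)} {g : Fin n → Fin m}
    (hf : GaloisDual f g) (hf' : GaloisDual f' g) : f = f' := by
  funext i
  refine eq_of_forall_ge_iff fun c => ?_
  induction c using Fin.lastCases with
  | last => simp [Fin.le_last]
  | cast j => simpa [Fin.le_def] using (hf i j).trans (hf' i j).symm

theorem GaloisDual.monotone_right {f : Fin (m + 1) → Fin (n + 1)} {g : Fin n → Fin m}
    (hfg : GaloisDual f g) : Monotone g := fun a b hab => by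
  have := (hfg (g a).castSucc a).2 (by simp)
  simpa using (hfg (g a).castSucc b).1 (this.trans hab)

theorem GaloisDual.monotone_left {f : Fin (m + 1) → Fin (n + 1)} {g : Fin n → Fin m}
    (hfg : GaloisDual f g) : Monotone f := fun a b hab => by
  refine le_of_forall_ge fun c hbc => ?_
  induction c using Fin.lastCases with
  | last => exact Fin.le_last _
  | cast j =>
    exact Fin.le_def.2 ((hfg a j).2 ((Fin.le_def.1 hab).trans ((hfg b j).1 (Fin.le_def.1 hbc))))

def countBelow (g : Fin n → Fin m) (i : Fin (m + 1)) : Fin (n + 1) :=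
  ⟨#{j | (g j : ℕ) < i}, Nat.lt_succ_of_le ((card_filter_le _ _).trans (by simp))⟩

theorem galoisDual_countBelow {g : Fin n → Fin m} (hg : Monotone g) :
    GaloisDual (countBelow g) g := fun i j => by
  rw [← not_lt, ← not_lt]
  exact not_congr <| Fin.lt_card_filter_iff_of_antitone (p := fun j => (g j : ℕ) < i)
    (fun a b hab h => (Fin.le_def.1 (hg hab)).trans_lt h) j

theorem countBelow_zero (g : Fin n → Fin m) : countBelow g 0 = 0 := by
  simp [countBelow]

theorem countBelow_last (g : Fin n → Fin m) : countBelow g (Fin.last m) = Fin.last n :=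
  Fin.ext (by simp [countBelow])

def lastBelow (f : Fin (m + 1) → Fin (n + 1)) (j : ℕ) : ℕ :=
  #{i : Fin m | (f i.succ : ℕ) ≤ j}

theorem le_lastBelow_iff {f : Fin (m + 1) → Fin (n + 1)} (hf : Monotone f) (hf0 : f 0 = 0)
    (i : Fin (m + 1)) (j : ℕ) : (i : ℕ) ≤ lastBelow f j ↔ (f i : ℕ) ≤ j := by
  induction i using Fin.cases with
  | zero => simp [hf0]
  | succ i =>
    exact Nat.add_one_le_iff.trans <| Fin.lt_card_filter_iff_of_antitone
      (fun a b hab h => (Fin.le_def.1 (hf (Fin.succ_le_succ_iff.2 hab))).trans h) i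

def dualMap (f : Fin (m + 1) → Fin (n + 1)) (hf : Monotone f) (hf0 : f 0 = 0)
    (hf_last : f (Fin.last m) = Fin.last n) (j : Fin n) : Fin m :=
  ⟨lastBelow f j, lt_of_not_ge fun h => by
    have := (le_lastBelow_iff hf hf0 (Fin.last m) j).1 h
    simp [hf_last] at this
    omega⟩

theorem galoisDual_dualMap (f : Fin (m + 1) → Fin (n + 1)) (hf : Monotone f) (hf0 : f 0 = 0)
    (hf_last : f (Fin.last m) = Fin.last n) : GaloisDual f (dualMap f hf hf0 hf_last) :=
  fun i j => (le_lastBelow_iff hf hf0 i j).symm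

end GaloisDual

namespace ActiveObj

variable {x y : ActiveObj}

def dual (f : x ⟶ y) : Fin y.n →o Fin x.n :=
  ⟨dualMap f.1 f.1.monotone f.2.1 f.2.2,
    (galoisDual_dualMap f.1 f.1.monotone f.2.1 f.2.2).monotone_right⟩

theorem galoisDual_dual (f : x ⟶ y) : GaloisDual f.1 (dual f) :=
  galoisDual_dualMap f.1 f.1.monotone f.2.1 f.2.2

theorem dual_eq_of_galoisDual {f : x ⟶ y} {g : Fin y.n →o Fin x.n} (h : GaloisDual f.1 g) :
    dual f = g :=
  OrderHom.ext _ _ ((galoisDual_dual f).right_unique h)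

def ofDual (g : Fin x.n →o Fin y.n) : y ⟶ x :=
  ⟨⟨countBelow g, (galoisDual_countBelow g.monotone).monotone_left⟩,
    countBelow_zero g, countBelow_last g⟩

def dualFunctor : ActiveObjᵒᵖ ⥤ AugObj where
  obj x := ⟨x.unop.n⟩
  map f := dual f.unop
  map_id _ := dual_eq_of_galoisDual GaloisDual.id
  map_comp f g := dual_eq_of_galoisDual ((galoisDual_dual g.unop).comp (galoisDual_dual f.unop))

instance : dualFunctor.Full where
  map_surjective g := ⟨(ofDual g).op, dual_eq_of_galoisDual (galoisDual_countBelow g.monotone)⟩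

instance : dualFunctor.Faithful where
  map_injective {_ _} f g hfg := Quiver.Hom.unop_inj <| Subtype.ext <| OrderHom.ext _ _ <|
    (galoisDual_dual f.unop).left_unique (by
      rw [show dual f.unop = dual g.unop from hfg]
      exact galoisDual_dual g.unop)

instance : dualFunctor.EssSurj where
  mem_essImage y := ⟨.op ⟨y.n⟩, ⟨eqToIso rfl⟩⟩

instance : dualFunctor.IsEquivalence where

end ActiveObj

theorem galoisDual_σmapAct (n : ℕ) (i : Fin (n + 1)) :
    GaloisDual (σmapAct n i) i.succAbove := fun k j => by
  show (if (k : ℕ) ≤ i then (k : ℕ) else k - 1) ≤ j ↔ (k : ℕ) ≤ (i.succAbove j : ℕ)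
  rw [Fin.succAbove]
  split_ifs <;> simp_all [Fin.lt_def] <;> omega

theorem galoisDual_δmapAct (m i : ℕ) (h1 : 1 ≤ i) (h2 : i ≤ m) :
    GaloisDual (δmapAct m i) (σaMap m (i - 1) (Nat.sub_one_lt_of_le h1 h2)) := fun k j => by
  show (if (k : ℕ) < i then (k : ℕ) else k + 1) ≤ j ↔
    (k : ℕ) ≤ (if (j : ℕ) ≤ i - 1 then (j : ℕ) else j - 1)
  split_ifs <;> omega

/-- The opposite of the wide subcategory of active morphisms of the simplex category
is equivalent to the augmented simplex category `Δ_a`, via an equivalence sending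
`[n]` to the linear order with `n` elements, each interior coface `δⁿ_i` (`0 < i < n`)
to the codegeneracy `σ^{n-2}_{i-1}`, and each codegeneracy `σⁿ_i` to the coface
`δⁿ_i`. -/
theorem activeOp_equiv_augmented :
    ∃ (e : ActiveObjᵒᵖ ≌ AugObj)
      (h : ∀ n : ℕ, e.functor.obj (Opposite.op (ActiveObj.mk n)) = AugObj.mk n),
      (∀ (n : ℕ) (i : Fin (n + 1)),
        e.functor.map (σact n i).op =
          eqToHom (h n) ≫ δa n i ≫ eqToHom (h (n + 1)).symm) ∧
      (∀ (m : ℕ) (i : ℕ) (h1 : 1 ≤ i) (h2 : i ≤ m),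
        e.functor.map (δact m i h1 h2).op =
          eqToHom (h (m + 1)) ≫ σa m (i - 1) (by omega) ≫ eqToHom (h m).symm) := by
  exact ⟨ActiveObj.dualFunctor.asEquivalence, fun _ => rfl,
    fun n i => ActiveObj.dual_eq_of_galoisDual (galoisDual_σmapAct n i),
    fun m i h1 h2 => ActiveObj.dual_eq_of_galoisDual (galoisDual_δmapAct m i h1 h2)⟩
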